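/- The minimal generators of the chiral space over the integrals of motion (odd sector): let 𝔪 ⊂ 𝒟 be the ideal generated by all the variables t₁,t₃,t₅,…. For every integer m ≥ 0, the quotient A′_m/𝔪A′_m is isomorphic as a complex vector space to W′_{m,0}. -/

import Mathlib

open scoped BigOperators

noncomputable section

/-- The ring `𝒟 = ℂ[t₁,t₃,t₅,…]`: variable `k : ℕ` stands for `t_{2k+1}`. -/
abbrev Dring : Type := MvPolynomial ℕ ℂ

/-- The series `∑_{k≥1} t_{2k-1} z^{2k-1}/(2k-1)`. -/
def genX : PowerSeries Dring :=
  PowerSeries.mk fun n =>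
    if n % 2 = 1 then ((n : ℂ)⁻¹) • (MvPolynomial.X ((n - 1) / 2) : Dring) else 0

/-- `T n` is the polynomial `T₋ₙ`, the `n`-th coefficient of `exp(genX) = ∑_j genX^j/j!`
(the sum may be truncated at `j = n` since `genX` has zero constant term). -/
def T (n : ℕ) : Dring :=
  ∑ j ∈ Finset.range (n + 1),
    ((j.factorial : ℂ)⁻¹) • (PowerSeries.coeff (R := Dring) n (genX ^ j))

/-- Index of a basis vector of the fermionic Fock space: a pair `(R, S)` of finite
sets of modes; `k ∈ R` stands for the factor `b_{k+1}` and `k ∈ S` for `a_{k+1}`. -/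
abbrev FockIdx : Type := Finset ℕ × Finset ℕ

/-- The full fermionic Fock space `⊕_m F_m`, with basis `FockIdx`. -/
abbrev Fock : Type := FockIdx →₀ ℂ

/-- `𝒟 ⊗ (⊕_m F_m)`, a free `𝒟`-module with basis `FockIdx`. -/
abbrev DFock : Type := FockIdx →₀ Dring

def charge (x : FockIdx) : ℤ := (x.1.card : ℤ) - x.2.card

def fsingle (x : FockIdx) : Fock := Finsupp.single x 1

/-- `αₙ` (for `n = k+1`, `k : ℕ`): wedging with `a_{k+1}` with the Koszul sign `(-1)^{deg ξ}`. -/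
def alpha (k : ℕ) : Fock →ₗ[ℂ] Fock :=
  Finsupp.lsum ℂ fun x => LinearMap.toSpanSingleton ℂ Fock
    (if k ∈ x.2 then 0 else
      (((-1 : ℂ) ^ x.1.card) * ((-1 : ℂ) ^ (x.2.filter (· < k)).card)) •
        fsingle (x.1, insert k x.2))

/-- `βₙ` (for `n = k+1`): contraction with `b_{k+1}*`, with Koszul signs. -/
def beta (k : ℕ) : Fock →ₗ[ℂ] Fock :=
  Finsupp.lsum ℂ fun x => LinearMap.toSpanSingleton ℂ Fock
    (if k ∈ x.1 then ((-1 : ℂ) ^ (x.1.filter (· < k)).card) • fsingle (x.1.erase k, x.2)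
     else 0)

/-- `ω = ∑_{n≥1} αₙ βₙ` (on each basis vector only finitely many terms are nonzero). -/
def omega : Fock →ₗ[ℂ] Fock :=
  Finsupp.lsum ℂ fun x => LinearMap.toSpanSingleton ℂ Fock
    (∑ k ∈ x.1, alpha k (beta k (fsingle x)))

/-- The charge-`m` Fock space `F_m ⊆ Fock`. -/
def FockC (m : ℤ) : Submodule ℂ Fock := Finsupp.supported ℂ ℂ {x | charge x = m}

def dsingle (x : FockIdx) : DFock := Finsupp.single x 1

/-- `αₙ`, extended `𝒟`-linearly to `𝒟 ⊗ Fock`. -/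
def dAlpha (k : ℕ) : DFock →ₗ[Dring] DFock :=
  Finsupp.lsum Dring fun x => LinearMap.toSpanSingleton Dring DFock
    (if k ∈ x.2 then 0 else
      (((-1 : Dring) ^ x.1.card) * ((-1 : Dring) ^ (x.2.filter (· < k)).card)) •
        dsingle (x.1, insert k x.2))

/-- `βₙ`, extended `𝒟`-linearly to `𝒟 ⊗ Fock`. -/
def dBeta (k : ℕ) : DFock →ₗ[Dring] DFock :=
  Finsupp.lsum Dring fun x => LinearMap.toSpanSingleton Dring DFock
    (if k ∈ x.1 then ((-1 : Dring) ^ (x.1.filter (· < k)).card) • dsingle (x.1.erase k, x.2)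
     else 0)

/-- `d = ∑_{n≥1} T₋₍₂ₙ₋₁₎ βₙ : 𝒟⊗F_m → 𝒟⊗F_{m-1}`. -/
def dOp : DFock →ₗ[Dring] DFock :=
  Finsupp.lsum Dring fun x => LinearMap.toSpanSingleton Dring DFock
    (∑ k ∈ x.1, T (2 * k + 1) • dBeta k (dsingle x))

/-- `ω = ∑_{n≥1} αₙ βₙ`, extended `𝒟`-linearly. -/
def dOmega : DFock →ₗ[Dring] DFock :=
  Finsupp.lsum Dring fun x => LinearMap.toSpanSingleton Dring DFock
    (∑ k ∈ x.1, dAlpha k (dBeta k (dsingle x)))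

/-- The charge-`m` part `𝒟 ⊗ F_m`, as a `𝒟`-submodule. -/
def DFockC (m : ℤ) : Submodule Dring DFock := Finsupp.supported Dring Dring {x | charge x = m}


/-! ### Odd sector
In the odd sector the `a`-modes are indexed by `n ≥ 0`: an element `k` of the second
component of a Fock index stands for `a′_k`, while an element `k` of the first component
stands for `b′_{k+1}`. -/

/-- `ω′ = ∑_{n≥1} α′ₙ β′ₙ : F′_m → F′_{m−2}`. -/
def omegaO : Fock →ₗ[ℂ] Fock :=
  Finsupp.lsum ℂ fun x => LinearMap.toSpanSingleton ℂ Fock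
    (∑ k ∈ x.1, alpha (k + 1) (beta k (fsingle x)))

/-- `d′ = α′₀ + ∑_{n≥1} T₋₂ₙ β′ₙ : 𝒟⊗F′_m → 𝒟⊗F′_{m−1}`. -/
def dOpO : DFock →ₗ[Dring] DFock :=
  Finsupp.lsum Dring fun x => LinearMap.toSpanSingleton Dring DFock
    (dAlpha 0 (dsingle x) + ∑ k ∈ x.1, T (2 * (k + 1)) • dBeta k (dsingle x))

/-- `ω′`, extended `𝒟`-linearly. -/
def dOmegaO : DFock →ₗ[Dring] DFock :=
  Finsupp.lsum Dring fun x => LinearMap.toSpanSingleton Dring DFock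
    (∑ k ∈ x.1, dAlpha (k + 1) (dBeta k (dsingle x)))

/-- `F′_{m,0} ⊆ F′_m`: the part not involving the mode `a′₀`. -/
def FockC0 (m : ℤ) : Submodule ℂ Fock :=
  Finsupp.supported ℂ ℂ {x | charge x = m ∧ 0 ∉ x.2}

/-- The charge-`m` part `𝒟 ⊗ F′_m`, as a `ℂ`-submodule of `𝒟 ⊗ Fock`. -/
def DFockCc (m : ℤ) : Submodule ℂ DFock := Finsupp.supported Dring ℂ {x | charge x = m}

/-- The `ℂ`-subspace `d′(𝒟⊗F′_{m+1}) + ω′(𝒟⊗F′_{m+2})` of `𝒟⊗F′_m`, so that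
`A′_m = (𝒟⊗F′_m)/NAO m`. -/
def NAO (m : ℤ) : Submodule ℂ DFock :=
  Submodule.map (dOpO.restrictScalars ℂ) (DFockCc (m + 1)) ⊔
    Submodule.map (dOmegaO.restrictScalars ℂ) (DFockCc (m + 2))

/-- The ideal `𝔪 = (t₁, t₃, t₅, …) ⊆ 𝒟`. -/
def mIdeal : Ideal Dring := Ideal.span (Set.range (MvPolynomial.X : ℕ → Dring))

/-- The `ℂ`-subspace of `𝒟⊗Fock` corresponding to `𝔪·(𝒟⊗F′_m)`. -/
def mPart (m : ℤ) : Submodule ℂ DFock :=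
  Submodule.span ℂ {z | ∃ c ∈ mIdeal, ∃ v ∈ DFockCc m, z = c • v}

/-- `A′_m/𝔪A′_m`, realized as the image of `𝒟⊗F′_m` in the quotient of `𝒟⊗Fock` by
`d′(𝒟⊗F′_{m+1}) + ω′(𝒟⊗F′_{m+2}) + 𝔪·(𝒟⊗F′_m)`. -/
def AmodMO (m : ℤ) : Submodule ℂ (DFock ⧸ (NAO m ⊔ mPart m)) :=
  Submodule.map (NAO m ⊔ mPart m).mkQ (DFockCc m)

/-- `W′_{m,0} = F′_{m,0}/ω′(F′_{m+2,0})`, realized as the image of `F′_{m,0}` in the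
quotient of `Fock` by `ω′(F′_{m+2,0})` (note `ω′(F′_{m+2,0}) ⊆ F′_{m,0}`). -/
def W0sub (m : ℤ) : Submodule ℂ (Fock ⧸ Submodule.map omegaO (FockC0 (m + 2))) :=
  Submodule.map (Submodule.map omegaO (FockC0 (m + 2))).mkQ (FockC0 m)

/-! Modulo `𝔪` every coefficient in `𝒟` may be replaced by its constant term, and modulo
`d′(𝒟⊗F′_{m+1}) + 𝔪(𝒟⊗F′_m)` every basis vector containing `a′₀` vanishes: `d′` of the same
vector with `a′₀` removed is that vector up to sign, plus terms `T₋₂ₙ β′ₙ(…)` with `T₋₂ₙ ∈ 𝔪`.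
So specializing `t = 0` and discarding the basis vectors containing `a′₀` kills `d′` and `𝔪`,
intertwines the two `ω′`, and is inverse, on the quotients, to the inclusion
`F′_{m,0} ⊆ 𝒟⊗F′_m`. -/

theorem Finsupp.supported_le_iff {α R M : Type*} [Semiring R] [AddCommMonoid M] [Module R M]
    {s : Set α} {P : Submodule R (α →₀ M)} :
    Finsupp.supported M R s ≤ P ↔ ∀ a ∈ s, ∀ b : M, Finsupp.single a b ∈ P := by
  refine ⟨fun h a ha b => h (Finsupp.single_mem_supported R b ha), fun h z hz => ?_⟩
  rw [← z.sum_single]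
  exact Submodule.finsuppSum_mem _ _ _ _ fun a ha => h a (hz (Finsupp.mem_support_iff.2 ha)) _

section MapMkQ

variable {R M N : Type*} [Ring R] [AddCommGroup M] [Module R M] [AddCommGroup N] [Module R N]
  {K M' : Submodule R M} {Q N' : Submodule R N}

def Submodule.mapMkQEquivOfInverse (f : M →ₗ[R] N) (g : N →ₗ[R] M)
    (hfK : K ≤ Q.comap f) (hgQ : Q ≤ K.comap g)
    (hf : M' ≤ N'.comap f) (hg : N' ≤ M'.comap g)
    (hgf : ∀ x ∈ M', g (f x) - x ∈ K) (hfg : ∀ y ∈ N', f (g y) - y ∈ Q) :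
    M'.map K.mkQ ≃ₗ[R] N'.map Q.mkQ :=
  LinearEquiv.ofLinearMap
    ((K.mapQ Q f hfK).restrict <| by
      rintro _ ⟨x, hx, rfl⟩
      exact ⟨f x, hf hx, rfl⟩)
    ((Q.mapQ K g hgQ).restrict <| by
      rintro _ ⟨y, hy, rfl⟩
      exact ⟨g y, hg hy, rfl⟩)
    (by
      ext ⟨_, y, hy, rfl⟩
      exact (Submodule.Quotient.eq Q).2 (hfg y hy))
    (by
      ext ⟨_, x, hx, rfl⟩
      exact (Submodule.Quotient.eq K).2 (hgf x hx))

end MapMkQ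

namespace SineGordonOdd

open MvPolynomial

theorem mem_mIdeal_iff {p : Dring} : p ∈ mIdeal ↔ constantCoeff p = 0 := by
  constructor
  · intro hp
    refine (Ideal.span_le (I := RingHom.ker constantCoeff)).2 ?_ hp
    rintro _ ⟨i, rfl⟩
    simp
  · intro hp
    rw [mIdeal, ← Set.image_univ, mem_ideal_span_X_image]
    intro d hd
    obtain ⟨i, hi⟩ : ∃ i, d i ≠ 0 := by
      by_contra! h
      rw [show d = 0 from Finsupp.ext h] at hd
      exact mem_support_iff.1 hd (by rwa [← constantCoeff_eq])
    exact ⟨i, trivial, hi⟩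

theorem map_constantCoeff_genX : PowerSeries.map constantCoeff genX = 0 := by
  ext n
  simp only [genX, PowerSeries.coeff_map, PowerSeries.coeff_mk, map_zero]
  split_ifs <;> simp [constantCoeff_smul]

theorem T_mem_mIdeal {n : ℕ} (hn : n ≠ 0) : T n ∈ mIdeal := by
  rw [mem_mIdeal_iff, T, map_sum]
  refine Finset.sum_eq_zero fun j _ => ?_
  rw [constantCoeff_smul, ← PowerSeries.coeff_map, map_pow, map_constantCoeff_genX]
  rcases j with _ | j <;> simp [PowerSeries.coeff_one, hn]

theorem dAlpha_single (k : ℕ) (x : FockIdx) (p : Dring) :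
    dAlpha k (Finsupp.single x p) =
      if k ∈ x.2 then 0 else Finsupp.single (x.1, insert k x.2)
        ((-1) ^ x.1.card * (-1) ^ (x.2.filter (· < k)).card * p) := by
  rw [dAlpha, Finsupp.lsum_single, LinearMap.toSpanSingleton_apply]
  split_ifs <;> simp [dsingle, mul_comm, -Finsupp.single_mul]

theorem alpha_single (k : ℕ) (x : FockIdx) (c : ℂ) :
    alpha k (Finsupp.single x c) =
      if k ∈ x.2 then 0 else Finsupp.single (x.1, insert k x.2)
        ((-1) ^ x.1.card * (-1) ^ (x.2.filter (· < k)).card * c) := by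
  rw [alpha, Finsupp.lsum_single, LinearMap.toSpanSingleton_apply]
  split_ifs <;> simp [fsingle, mul_comm, -Finsupp.single_mul]

theorem dBeta_single (k : ℕ) (x : FockIdx) (p : Dring) :
    dBeta k (Finsupp.single x p) =
      if k ∈ x.1 then Finsupp.single (x.1.erase k, x.2) ((-1) ^ (x.1.filter (· < k)).card * p)
      else 0 := by
  rw [dBeta, Finsupp.lsum_single, LinearMap.toSpanSingleton_apply]
  split_ifs <;> simp [dsingle, mul_comm, -Finsupp.single_mul]

theorem beta_single (k : ℕ) (x : FockIdx) (c : ℂ) :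
    beta k (Finsupp.single x c) =
      if k ∈ x.1 then Finsupp.single (x.1.erase k, x.2) ((-1) ^ (x.1.filter (· < k)).card * c)
      else 0 := by
  rw [beta, Finsupp.lsum_single, LinearMap.toSpanSingleton_apply]
  split_ifs <;> simp [fsingle, mul_comm, -Finsupp.single_mul]

theorem dOpO_single (x : FockIdx) (p : Dring) :
    dOpO (Finsupp.single x p) = dAlpha 0 (Finsupp.single x p) +
      ∑ k ∈ x.1, T (2 * (k + 1)) • dBeta k (Finsupp.single x p) := by
  rw [dOpO, Finsupp.lsum_single, LinearMap.toSpanSingleton_apply, smul_add, Finset.smul_sum]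
  simp only [← map_smul, dsingle, Finsupp.smul_single, smul_eq_mul, mul_one, one_mul, mul_comm p]

theorem dOmegaO_single (x : FockIdx) (p : Dring) :
    dOmegaO (Finsupp.single x p) =
      ∑ k ∈ x.1, dAlpha (k + 1) (dBeta k (Finsupp.single x p)) := by
  rw [dOmegaO, Finsupp.lsum_single, LinearMap.toSpanSingleton_apply, Finset.smul_sum]
  simp only [← map_smul, dsingle, Finsupp.smul_single, smul_eq_mul, mul_one]

theorem omegaO_single (x : FockIdx) (c : ℂ) :
    omegaO (Finsupp.single x c) = ∑ k ∈ x.1, alpha (k + 1) (beta k (Finsupp.single x c)) := by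
  rw [omegaO, Finsupp.lsum_single, LinearMap.toSpanSingleton_apply, Finset.smul_sum]
  simp only [← map_smul, fsingle, Finsupp.smul_single, smul_eq_mul, mul_one]

def reduction : DFock →ₗ[ℂ] Fock :=
  Finsupp.lsum ℂ fun x => if 0 ∈ x.2 then 0 else Finsupp.lsingle x ∘ₗ lcoeff ℂ 0

def constIncl : Fock →ₗ[ℂ] DFock :=
  Finsupp.mapRange.linearMap (Algebra.linearMap ℂ Dring)

theorem reduction_single (x : FockIdx) (p : Dring) :
    reduction (Finsupp.single x p) =
      if 0 ∈ x.2 then 0 else Finsupp.single x (constantCoeff p) := by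
  simp only [reduction, Finsupp.lsum_single]
  split_ifs <;> simp [constantCoeff_eq]

theorem constIncl_single (x : FockIdx) (c : ℂ) :
    constIncl (Finsupp.single x c) = Finsupp.single x (C c) := by
  simp [constIncl, algebraMap_eq]

theorem reduction_smul (p : Dring) (z : DFock) :
    reduction (p • z) = constantCoeff p • reduction z := by
  induction z using Finsupp.induction_linear with
  | zero => simp
  | add a b ha hb => rw [smul_add, map_add, map_add, ha, hb, smul_add]
  | single x q =>
    rw [Finsupp.smul_single, reduction_single, reduction_single]
    split_ifs <;> simp

theorem reduction_dAlpha_zero (z : DFock) : reduction (dAlpha 0 z) = 0 := by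
  induction z using Finsupp.induction_linear with
  | zero => simp
  | add a b ha hb => rw [map_add, map_add, ha, hb, add_zero]
  | single x p =>
    rw [dAlpha_single]
    split_ifs <;> simp [reduction_single, -Finsupp.single_mul]

theorem reduction_dAlpha_succ (k : ℕ) (z : DFock) :
    reduction (dAlpha (k + 1) z) = alpha (k + 1) (reduction z) := by
  induction z using Finsupp.induction_linear with
  | zero => simp
  | add a b ha hb => simp only [map_add, ha, hb]
  | single x p =>
    rw [dAlpha_single, reduction_single]
    split_ifs <;> simp [reduction_single, alpha_single, *, -Finsupp.single_mul]

theorem reduction_dBeta (k : ℕ) (z : DFock) : reduction (dBeta k z) = beta k (reduction z) := by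
  induction z using Finsupp.induction_linear with
  | zero => simp
  | add a b ha hb => simp only [map_add, ha, hb]
  | single x p =>
    rw [dBeta_single, reduction_single]
    split_ifs <;> simp [reduction_single, beta_single, *, -Finsupp.single_mul]

theorem reduction_dOpO (z : DFock) : reduction (dOpO z) = 0 := by
  induction z using Finsupp.induction_linear with
  | zero => simp
  | add a b ha hb => rw [map_add, map_add, ha, hb, add_zero]
  | single x p =>
    rw [dOpO_single, map_add, reduction_dAlpha_zero, map_sum, zero_add]
    refine Finset.sum_eq_zero fun k _ => ?_
    rw [reduction_smul, mem_mIdeal_iff.1 (T_mem_mIdeal (by omega)), zero_smul]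

theorem reduction_dOmegaO (z : DFock) : reduction (dOmegaO z) = omegaO (reduction z) := by
  induction z using Finsupp.induction_linear with
  | zero => simp
  | add a b ha hb => simp only [map_add, ha, hb]
  | single x p =>
    simp only [dOmegaO_single, map_sum, reduction_dAlpha_succ, reduction_dBeta]
    rw [reduction_single]
    split_ifs
    · simp
    · rw [omegaO_single]

theorem constIncl_alpha (k : ℕ) (v : Fock) : constIncl (alpha k v) = dAlpha k (constIncl v) := by
  induction v using Finsupp.induction_linear with
  | zero => simp
  | add a b ha hb => simp only [map_add, ha, hb]
  | single x c =>
    rw [alpha_single, constIncl_single, dAlpha_single]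
    split_ifs <;> simp [constIncl_single, -Finsupp.single_mul]

theorem constIncl_beta (k : ℕ) (v : Fock) : constIncl (beta k v) = dBeta k (constIncl v) := by
  induction v using Finsupp.induction_linear with
  | zero => simp
  | add a b ha hb => simp only [map_add, ha, hb]
  | single x c =>
    rw [beta_single, constIncl_single, dBeta_single]
    split_ifs <;> simp [constIncl_single, -Finsupp.single_mul]

theorem constIncl_omegaO (v : Fock) : constIncl (omegaO v) = dOmegaO (constIncl v) := by
  induction v using Finsupp.induction_linear with
  | zero => simp
  | add a b ha hb => simp only [map_add, ha, hb]
  | single x c =>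
    simp only [omegaO_single, map_sum, constIncl_alpha, constIncl_beta]
    rw [constIncl_single, dOmegaO_single]

theorem DFockCc_le_comap_reduction (m : ℤ) : DFockCc m ≤ (FockC0 m).comap reduction := by
  refine Finsupp.supported_le_iff.2 fun x hx p => ?_
  rw [Submodule.mem_comap, reduction_single]
  split_ifs with h0
  · exact zero_mem _
  · exact Finsupp.single_mem_supported ℂ _ ⟨hx, h0⟩

theorem FockC0_le_comap_constIncl (m : ℤ) : FockC0 m ≤ (DFockCc m).comap constIncl :=
  Finsupp.supported_le_iff.2 fun x hx c => by
    rw [Submodule.mem_comap, constIncl_single]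
    exact Finsupp.single_mem_supported ℂ _ hx.1

theorem reduction_constIncl_of_mem {m : ℤ} {v : Fock} (hv : v ∈ FockC0 m) :
    reduction (constIncl v) = v := by
  suffices FockC0 m ≤ LinearMap.eqLocus (reduction ∘ₗ constIncl) LinearMap.id from this hv
  refine Finsupp.supported_le_iff.2 fun x hx c => ?_
  simp [LinearMap.mem_eqLocus, constIncl_single, reduction_single, hx.2]

theorem dBeta_single_mem_DFockCc {m : ℤ} {x : FockIdx} (hx : charge x = m + 1) (k : ℕ)
    (p : Dring) : dBeta k (Finsupp.single x p) ∈ DFockCc m := by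
  rw [dBeta_single]
  split_ifs with hk
  · refine Finsupp.single_mem_supported ℂ _ (show charge _ = m from ?_)
    simp only [charge, Finset.cast_card_erase_of_mem hk] at hx ⊢
    omega
  · exact zero_mem _

theorem single_mem_of_zero_mem {m : ℤ} {x : FockIdx} (hx : charge x = m) (h0 : 0 ∈ x.2)
    (p : Dring) : Finsupp.single x p ∈ NAO m ⊔ mPart m := by
  set y : FockIdx := (x.1, x.2.erase 0)
  set q : Dring := (-1) ^ x.1.card * p
  have hy : charge y = m + 1 := by
    simp only [y, charge, Finset.cast_card_erase_of_mem h0] at hx ⊢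
    omega
  have hd : dOpO (Finsupp.single y q) =
      Finsupp.single x p + ∑ k ∈ x.1, T (2 * (k + 1)) • dBeta k (Finsupp.single y q) := by
    rw [dOpO_single, dAlpha_single, if_neg (Finset.notMem_erase 0 x.2)]
    congr 2
    · simp [y, Finset.insert_erase h0]
    · simp [q, y, ← mul_assoc, ← pow_add, ← two_mul]
  have hdK : dOpO (Finsupp.single y q) ∈ NAO m :=
    Submodule.mem_sup_left ⟨_, Finsupp.single_mem_supported ℂ q hy, rfl⟩
  have hmK : ∑ k ∈ x.1, T (2 * (k + 1)) • dBeta k (Finsupp.single y q) ∈ mPart m :=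
    Submodule.sum_mem _ fun k _ => Submodule.subset_span
      ⟨_, T_mem_mIdeal (by omega), _, dBeta_single_mem_DFockCc hy k q, rfl⟩
  rw [← add_sub_cancel_right (Finsupp.single x p) (∑ k ∈ x.1, _), ← hd]
  exact sub_mem (Submodule.mem_sup_left hdK) (Submodule.mem_sup_right hmK)

theorem constIncl_reduction_sub_mem {m : ℤ} {z : DFock} (hz : z ∈ DFockCc m) :
    constIncl (reduction z) - z ∈ NAO m ⊔ mPart m := by
  suffices DFockCc m ≤ (NAO m ⊔ mPart m).comap (constIncl ∘ₗ reduction - LinearMap.id) from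
    this hz
  refine Finsupp.supported_le_iff.2 fun x hx p => ?_
  rw [Submodule.mem_comap, LinearMap.sub_apply, LinearMap.comp_apply, reduction_single,
    LinearMap.id_apply]
  split_ifs with h0
  · rw [map_zero, zero_sub]
    exact neg_mem (single_mem_of_zero_mem hx h0 p)
  · rw [constIncl_single, ← Finsupp.single_sub]
    refine Submodule.mem_sup_right (Submodule.subset_span ⟨C (constantCoeff p) - p,
      mem_mIdeal_iff.2 (by simp), dsingle x, Finsupp.single_mem_supported ℂ 1 hx, ?_⟩)
    simp [dsingle]

theorem NAO_sup_mPart_le_comap_reduction (m : ℤ) :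
    NAO m ⊔ mPart m ≤ (Submodule.map omegaO (FockC0 (m + 2))).comap reduction := by
  refine sup_le (sup_le ?_ ?_) ?_
  · rintro _ ⟨z, -, rfl⟩
    rw [Submodule.mem_comap, LinearMap.restrictScalars_apply, reduction_dOpO]
    exact zero_mem _
  · rintro _ ⟨z, hz, rfl⟩
    exact ⟨reduction z, DFockCc_le_comap_reduction _ hz, (reduction_dOmegaO z).symm⟩
  · refine Submodule.span_le.2 ?_
    rintro _ ⟨c, hc, v, -, rfl⟩
    rw [SetLike.mem_coe, Submodule.mem_comap, reduction_smul, mem_mIdeal_iff.1 hc, zero_smul]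
    exact zero_mem _

theorem map_omegaO_le_comap_constIncl (m : ℤ) :
    Submodule.map omegaO (FockC0 (m + 2)) ≤ (NAO m ⊔ mPart m).comap constIncl := by
  rintro _ ⟨w, hw, rfl⟩
  rw [Submodule.mem_comap, constIncl_omegaO]
  exact Submodule.mem_sup_left
    (Submodule.mem_sup_right ⟨constIncl w, FockC0_le_comap_constIncl _ hw, rfl⟩)

end SineGordonOdd

/-- For every integer `m ≥ 0`, `A′_m/𝔪A′_m ≅ W′_{m,0}` as `ℂ`-vector
spaces, where `𝔪 = (t₁,t₃,…) ⊆ 𝒟`. -/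
theorem minimal_generators_odd (m : ℕ) :
    Nonempty (↥(AmodMO m) ≃ₗ[ℂ] ↥(W0sub m)) := by
  open SineGordonOdd in
  exact ⟨Submodule.mapMkQEquivOfInverse reduction constIncl
    (NAO_sup_mPart_le_comap_reduction m) (map_omegaO_le_comap_constIncl m)
    (DFockCc_le_comap_reduction m) (FockC0_le_comap_constIncl m)
    (fun _ => constIncl_reduction_sub_mem)
    (fun v hv => by rw [reduction_constIncl_of_mem hv, sub_self]; exact zero_mem _)⟩

end
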